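/- arXiv:2604.13943 — 9 statements merged into one kernel-verified Lean document; each statement's English description precedes it below -/
import Mathlib

section
/- For every positive integer i and every positive integer n, if i % 2^n = 2^(n-1), then (i - 1) XOR (2^n - 1) = i; that is, flipping the n least significant bits of i - 1 increments it to i. -/
theorem stmt_3 (i n : ℕ) (hi : 0 < i) (hn : 0 < n)
    (h : i % 2 ^ n = 2 ^ (n - 1)) :
    (i - 1) ^^^ (2 ^ n - 1) = i := by
  have hp : 0 < 2 ^ (n - 1) := Nat.two_pow_pos _
  have hlt : 2 ^ (n - 1) < 2 ^ n := Nat.pow_lt_pow_right (by norm_num) (by omega)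
  have hq : i = 2 ^ n * (i / 2 ^ n) + 2 ^ (n - 1) := by
    conv_lhs => rw [← Nat.div_add_mod i (2 ^ n)]
    rw [h]
  have hi1 : i - 1 = 2 ^ n * (i / 2 ^ n) + (2 ^ (n - 1) - 1) := by omega
  apply Nat.eq_of_testBit_eq
  intro j
  conv_rhs => rw [hq]
  rw [Nat.testBit_xor, hi1, Nat.testBit_two_pow_mul_add _ (by omega) j,
    Nat.testBit_two_pow_mul_add _ hlt j, Nat.testBit_two_pow_sub_one]
  by_cases hj : j < n
  · simp only [hj, if_pos, Nat.testBit_two_pow_sub_one, Nat.testBit_two_pow]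
    rcases Nat.lt_or_ge j (n - 1) with h1 | h1
    · simp [h1]; omega
    · have : j = n - 1 := by omega
      simp [this, show ¬ (n-1 < n-1) by omega]
  · simp [hj]
end

section
/- Let m ≥ 1 and let X < 2^m be a natural number. Starting from γ = 0 and folding over i = 1, 2, …, m the update γ ↦ (if X.testBit t = true for all t with m - i ≤ t < m then γ XOR ((i-1) XOR i) else γ), the final value of γ equals LOC_m(X). (Correctness of the Modular LOC algorithm.) -/
/-- The `m`-bit leading-one count: `m` if `X = 2^m - 1`, otherwise the least `γ`
such that `X.testBit (m - 1 - γ) = false`. -/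
noncomputable def LOC (m X : ℕ) : ℕ :=
  if X = 2 ^ m - 1 then m else sInf {γ : ℕ | X.testBit (m - 1 - γ) = false}

/-! Each performed step `γ ↦ γ ^^^ ((i - 1) ^^^ i)` turns `i - 1` into `i`, so the fold counts
the steps performed as long as they form an initial segment `1, …, k`. The top `i` bits of `X` are
all set exactly when `i ≤ LOC m X`, so the steps performed are `1, …, LOC m X`. -/

theorem foldl_ite_le_xor_pred_xor_eq_min (k m : ℕ) :
    ((List.range m).map (· + 1)).foldl
      (fun γ i => if i ≤ k then γ ^^^ ((i - 1) ^^^ i) else γ) 0 = min k m := by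
  induction m with
  | zero => simp
  | succ n ih =>
    simp only [List.range_succ, List.map_append, List.foldl_append, ih, List.map_cons,
      List.map_nil, List.foldl_cons, List.foldl_nil, Nat.add_sub_cancel]
    split_ifs with h
    · rw [min_eq_right (by omega : n ≤ k), ← Nat.xor_assoc, Nat.xor_self, Nat.zero_xor]
      omega
    · omega

theorem Nat.exists_testBit_eq_false_of_ne {m X : ℕ} (hX : X < 2 ^ m) (hne : X ≠ 2 ^ m - 1) :
    ∃ t < m, X.testBit t = false := by
  by_contra! h
  refine hne (Nat.eq_of_testBit_eq fun t => ?_)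
  rw [Nat.testBit_two_pow_sub_one]
  by_cases ht : t < m
  · simpa [ht] using h t ht
  · simpa [ht] using Nat.testBit_eq_false_of_lt (hX.trans_le (Nat.pow_le_pow_right two_pos (by omega)))

theorem LOC_lt_and_testBit_eq_false {m X : ℕ} (hX : X < 2 ^ m) (hne : X ≠ 2 ^ m - 1) :
    LOC m X < m ∧ X.testBit (m - 1 - LOC m X) = false := by
  obtain ⟨t, ht, hbit⟩ := Nat.exists_testBit_eq_false_of_ne hX hne
  have hmem : m - 1 - t ∈ {γ : ℕ | X.testBit (m - 1 - γ) = false} := by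
    simpa [show m - 1 - (m - 1 - t) = t by omega] using hbit
  rw [LOC, if_neg hne]
  exact ⟨(Nat.sInf_le hmem).trans_lt (by omega), Nat.sInf_mem ⟨_, hmem⟩⟩

theorem LOC_le {m X : ℕ} (hX : X < 2 ^ m) : LOC m X ≤ m := by
  by_cases h : X = 2 ^ m - 1
  · simp [LOC, h]
  · exact (LOC_lt_and_testBit_eq_false hX h).1.le

theorem testBit_eq_true_of_lt_LOC {m X γ : ℕ} (hγ : γ < LOC m X) (hγm : γ < m) :
    X.testBit (m - 1 - γ) = true := by
  unfold LOC at hγ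
  split_ifs at hγ with h
  · rw [h, Nat.testBit_two_pow_sub_one]
    simpa using (by omega : m - 1 - γ < m)
  · simpa using Nat.notMem_of_lt_sInf hγ

theorem testBit_top_eq_true_iff_le_LOC {m X i : ℕ} (hX : X < 2 ^ m) (hi : i ≤ m) :
    (∀ t, t < m → m - i ≤ t → X.testBit t = true) ↔ i ≤ LOC m X := by
  constructor
  · intro h
    by_contra! hlt
    have hne : X ≠ 2 ^ m - 1 := fun hfull => by simp [LOC, hfull] at hlt; omega
    obtain ⟨hLOC, hbit⟩ := LOC_lt_and_testBit_eq_false hX hne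
    simp [h (m - 1 - LOC m X) (by omega) (by omega)] at hbit
  · intro hle t ht hit
    simpa [show m - 1 - (m - 1 - t) = t by omega] using
      testBit_eq_true_of_lt_LOC (m := m) (X := X) (γ := m - 1 - t) (by omega) (by omega)

theorem stmt_6_general (m X : ℕ) (hX : X < 2 ^ m) :
    (((List.range m).map (· + 1)).foldl
      (fun γ i =>
        if ∀ t, t < m → m - i ≤ t → X.testBit t = true then
          γ ^^^ ((i - 1) ^^^ i)
        else γ) 0) = LOC m X := by
  rw [← min_eq_left (LOC_le hX), ← foldl_ite_le_xor_pred_xor_eq_min]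
  refine List.foldl_ext _ _ _ fun γ i hi => ?_
  obtain ⟨j, hj, rfl⟩ : ∃ j < m, j + 1 = i := by simpa using hi
  simp only [testBit_top_eq_true_iff_le_LOC hX (show j + 1 ≤ m by omega)]

theorem stmt_6 (m X : ℕ) (hm : 1 ≤ m) (hX : X < 2 ^ m) :
    (((List.range m).map (· + 1)).foldl
      (fun γ i =>
        if ∀ t, t < m → m - i ≤ t → X.testBit t = true then
          γ ^^^ ((i - 1) ^^^ i)
        else γ) 0) = LOC m X :=
  stmt_6_general m X hX
end

section
/- Let m ≥ 1 and let X < 2^m be a natural number. The number of indices i with 1 ≤ i ≤ m such that X.testBit t = true for all t with m - i ≤ t < m equals LOC_m(X); that is, the conditional update in the Modular LOC algorithm is executed exactly LOC_m(X) times. -/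
theorem stmt_7 (m X : ℕ) (hm : 1 ≤ m) (hX : X < 2 ^ m) :
    ((Finset.Icc 1 m).filter
      (fun i => ∀ t, t < m → m - i ≤ t → X.testBit t = true)).card = LOC m X := by
  unfold LOC
  by_cases hcase : X = 2 ^ m - 1
  · simp only [if_pos hcase]
    have hall : ∀ i ∈ Finset.Icc 1 m, ∀ t, t < m → m - i ≤ t → X.testBit t = true := by
      intro i _ t ht _
      subst hcase
      simp [Nat.testBit_two_pow_sub_one, ht]
    rw [Finset.filter_true_of_mem hall, Nat.card_Icc]
    omega
  · simp only [if_neg hcase]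
    -- there exists a false bit below m
    have hex : ∃ t, t < m ∧ X.testBit t = false := by
      by_contra h
      push_neg at h
      apply hcase
      apply Nat.eq_of_testBit_eq
      intro j
      rw [Nat.testBit_two_pow_sub_one]
      by_cases hj : j < m
      · have := h j hj
        simp [hj]
        revert this
        cases X.testBit j <;> simp
      · have h1 : X.testBit j = false := Nat.testBit_eq_false_of_lt
          (lt_of_lt_of_le hX (Nat.pow_le_pow_right (by norm_num) (le_of_not_gt hj)))
        simp [h1, hj]
    obtain ⟨t, htm, htf⟩ := hex
    set S : Set ℕ := {γ : ℕ | X.testBit (m - 1 - γ) = false} with hS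
    have hne : (m - 1 - t) ∈ S := by
      have : m - 1 - (m - 1 - t) = t := by omega
      simp [hS, this, htf]
    set γ0 := sInf S with hγ0def
    have hmem : X.testBit (m - 1 - γ0) = false := Nat.sInf_mem ⟨_, hne⟩
    have hγ0le : γ0 ≤ m - 1 := le_trans (Nat.sInf_le hne) (by omega)
    have hlt : ∀ γ < γ0, X.testBit (m - 1 - γ) = true := by
      intro γ hγ
      have := Nat.notMem_of_lt_sInf hγ
      simp only [hS, Set.mem_setOf_eq] at this
      revert this
      cases X.testBit (m - 1 - γ) <;> simp
    have hfilter : (Finset.Icc 1 m).filter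
        (fun i => ∀ t, t < m → m - i ≤ t → X.testBit t = true) = Finset.Icc 1 γ0 := by
      ext i
      simp only [Finset.mem_filter, Finset.mem_Icc]
      constructor
      · rintro ⟨⟨h1, h2⟩, hP⟩
        refine ⟨h1, ?_⟩
        by_contra hgt
        push_neg at hgt
        have := hP (m - 1 - γ0) (by omega) (by omega)
        rw [hmem] at this
        exact Bool.false_ne_true this
      · rintro ⟨h1, h2⟩
        refine ⟨⟨h1, by omega⟩, ?_⟩
        intro t ht hmt
        have h3 : m - 1 - t < γ0 := by omega
        have := hlt _ h3
        have h4 : m - 1 - (m - 1 - t) = t := by omega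
        rwa [h4] at this
    rw [hfilter, Nat.card_Icc]
    omega
end

section
/- Let m ≥ 1 and let X < 2^(2m) be a natural number, with high half X_H = X / 2^m and low half X_L = X % 2^m. Then LZC_{2m}(X) = m + LZC_m(X_L) if X_H = 0, and LZC_{2m}(X) = LZC_m(X_H) otherwise. -/
/-!
For `0 < X < 2 ^ m` the leading one of `X` sits at bit `log₂ X`, so `LZC m X = m - 1 - log₂ X`.
Both cases then reduce to arithmetic on `log₂`: if the high half vanishes, `X` is its own low half
and gains `m` leading zeros in width `2m`; otherwise `log₂ X = m + log₂ (X / 2 ^ m)`.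
-/

/-- The `m`-bit leading-zero count: `m` if `X = 0`, otherwise the least `γ`
such that `X.testBit (m - 1 - γ) = true`. -/
noncomputable def LZC (m X : ℕ) : ℕ :=
  if X = 0 then m else sInf {γ : ℕ | X.testBit (m - 1 - γ) = true}

theorem LZC_zero (m : ℕ) : LZC m 0 = m := if_pos rfl

theorem LZC_eq_sub_log2 {m X : ℕ} (hX0 : X ≠ 0) (hX : X < 2 ^ m) :
    LZC m X = m - 1 - X.log2 := by
  have hlog : X.log2 < m := (Nat.log2_lt hX0).2 hX
  have hmem : m - 1 - X.log2 ∈ {γ : ℕ | X.testBit (m - 1 - γ) = true} := by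
    show X.testBit (m - 1 - (m - 1 - X.log2)) = true
    rw [Nat.sub_sub_self (by omega)]
    exact Nat.testBit_log2 hX0
  rw [LZC, if_neg hX0]
  refine le_antisymm (Nat.sInf_le hmem) (le_csInf ⟨_, hmem⟩ fun γ hγ => ?_)
  by_contra! hlt
  have hsmall : X < 2 ^ (m - 1 - γ) := (Nat.log2_lt hX0).1 (by omega)
  exact absurd hγ (by simp [Nat.testBit_lt_two_pow hsmall])

theorem log2_div_two_pow_add {X m : ℕ} (h : X / 2 ^ m ≠ 0) :
    (X / 2 ^ m).log2 + m = X.log2 := by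
  have hle : m ≤ Nat.log 2 X :=
    Nat.le_log_of_pow_le one_lt_two (Nat.le_of_not_lt fun hlt => h (Nat.div_eq_of_lt hlt))
  rw [Nat.log2_eq_log_two, Nat.log2_eq_log_two, Nat.log_div_base_pow]
  omega

theorem stmt_9_general (m X : ℕ) (hX : X < 2 ^ (2 * m)) :
    LZC (2 * m) X =
      if X / 2 ^ m = 0 then m + LZC m (X % 2 ^ m) else LZC m (X / 2 ^ m) := by
  split_ifs with hH
  · have hXm : X < 2 ^ m := (Nat.div_eq_zero_iff.1 hH).resolve_left (by positivity)
    rw [Nat.mod_eq_of_lt hXm]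
    rcases eq_or_ne X 0 with rfl | hX0
    · simp only [LZC_zero, two_mul]
    · have hlogX := (Nat.log2_lt hX0).2 hXm
      rw [LZC_eq_sub_log2 hX0 hX, LZC_eq_sub_log2 hX0 hXm]
      omega
  · have hHlt : X / 2 ^ m < 2 ^ m := by
      rw [Nat.div_lt_iff_lt_mul (by positivity), ← pow_add, ← two_mul]
      exact hX
    have hX0 : X ≠ 0 := fun h => hH (by simp [h])
    have hlogX := log2_div_two_pow_add hH
    have hlogH := (Nat.log2_lt hH).2 hHlt
    rw [LZC_eq_sub_log2 hX0 hX, LZC_eq_sub_log2 hH hHlt]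
    omega

theorem stmt_9 (m X : ℕ) (hm : 1 ≤ m) (hX : X < 2 ^ (2 * m)) :
    LZC (2 * m) X =
      if X / 2 ^ m = 0 then m + LZC m (X % 2 ^ m) else LZC m (X / 2 ^ m) :=
  stmt_9_general m X hX
end

section
/- Let m ≥ 1 and let X < 2^(2m) be a natural number, with high half X_H = X / 2^m and low half X_L = X % 2^m. Then LOC_{2m}(X) = m + LOC_m(X_L) if X_H = 2^m - 1, and LOC_{2m}(X) = LOC_m(X_H) otherwise. -/
/-!
Both sides are characterised by the same property: `k` is the leading-one count of an `m`-bit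
number iff its top `k` bits are set and, if `k < m`, the next one is clear. Such a `k` is
unique, and the top bits of `X` as a `2m`-bit number are the bits of `X / 2^m` followed by
those of `X % 2^m`. So the count of `X` is that of the high half unless the high half is all
ones, in which case it is `m` plus the count of the low half.
-/

def IsLeadingOnes (m X k : ℕ) : Prop :=
  k ≤ m ∧ (∀ j < k, X.testBit (m - 1 - j) = true) ∧ (k < m → X.testBit (m - 1 - k) = false)

theorem IsLeadingOnes.unique {m X k k' : ℕ} (h : IsLeadingOnes m X k)
    (h' : IsLeadingOnes m X k') : k = k' := by
  obtain ⟨hk, hones, hzero⟩ := h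
  obtain ⟨hk', hones', hzero'⟩ := h'
  rcases lt_trichotomy k k' with hlt | heq | hgt
  · exact absurd (hones' k hlt) (by simp [hzero (by omega)])
  · exact heq
  · exact absurd (hones k' hgt) (by simp [hzero' (by omega)])

theorem Nat.eq_two_pow_sub_one_of_testBit {m X : ℕ} (hX : X < 2 ^ m)
    (h : ∀ i < m, X.testBit i = true) : X = 2 ^ m - 1 := by
  refine Nat.eq_of_testBit_eq fun i => ?_
  rw [Nat.testBit_two_pow_sub_one]
  by_cases hi : i < m
  · simp [h i hi, hi]
  · have : X < 2 ^ i := hX.trans_le (Nat.pow_le_pow_right two_pos (not_lt.mp hi))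
    simp [hi, Nat.testBit_eq_false_of_lt this]

theorem isLeadingOnes_LOC {m X : ℕ} (hX : X < 2 ^ m) : IsLeadingOnes m X (LOC m X) := by
  unfold LOC
  split_ifs with hall
  · subst hall
    refine ⟨le_rfl, fun j hj => ?_, fun h => absurd h (lt_irrefl m)⟩
    simp [Nat.testBit_two_pow_sub_one]
    omega
  · set S := {γ : ℕ | X.testBit (m - 1 - γ) = false}
    obtain ⟨i, hi, hbit⟩ : ∃ i < m, X.testBit i = false := by
      by_contra! hne
      exact hall (Nat.eq_two_pow_sub_one_of_testBit hX fun i hi => by simpa using hne i hi)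
    have hmem : m - 1 - i ∈ S := by
      simp only [S, Set.mem_ofPred_eq, show m - 1 - (m - 1 - i) = i by omega, hbit]
    have hlt : sInf S < m := (Nat.sInf_le hmem).trans_lt (by omega)
    refine ⟨hlt.le, fun j hj => ?_, fun _ => Nat.sInf_mem ⟨_, hmem⟩⟩
    simpa [S] using Nat.notMem_of_lt_sInf hj

theorem LOC_eq_of_isLeadingOnes {m X k : ℕ} (hX : X < 2 ^ m) (h : IsLeadingOnes m X k) :
    LOC m X = k :=
  (isLeadingOnes_LOC hX).unique h

theorem LOC_lt_of_ne {m X : ℕ} (hX : X < 2 ^ m) (hne : X ≠ 2 ^ m - 1) : LOC m X < m := by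
  obtain ⟨hle, hones, -⟩ := isLeadingOnes_LOC hX
  refine lt_of_le_of_ne hle fun heq => hne (Nat.eq_two_pow_sub_one_of_testBit hX fun i hi => ?_)
  simpa [show m - 1 - (m - 1 - i) = i by omega] using hones (m - 1 - i) (by omega)

section Halves

variable {m X k : ℕ}

theorem testBit_two_mul_sub_of_lt {j : ℕ} (hj : j < m) :
    X.testBit (2 * m - 1 - j) = (X / 2 ^ m).testBit (m - 1 - j) := by
  rw [Nat.testBit_div_two_pow, show m - 1 - j + m = 2 * m - 1 - j by omega]

theorem testBit_two_mul_sub_of_le {j : ℕ} (hj : m ≤ j) (hj' : j < 2 * m) :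
    X.testBit (2 * m - 1 - j) = (X % 2 ^ m).testBit (m - 1 - (j - m)) := by
  rw [Nat.testBit_mod_two_pow, show m - 1 - (j - m) = 2 * m - 1 - j by omega]
  simp [show 2 * m - 1 - j < m by omega]

theorem IsLeadingOnes.two_mul_of_high (h : IsLeadingOnes m (X / 2 ^ m) k) (hk : k < m) :
    IsLeadingOnes (2 * m) X k := by
  obtain ⟨-, hones, hzero⟩ := h
  refine ⟨by omega, fun j hj => ?_, fun _ => ?_⟩
  · rw [testBit_two_mul_sub_of_lt (by omega)]
    exact hones j hj
  · rw [testBit_two_mul_sub_of_lt hk]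
    exact hzero hk

theorem IsLeadingOnes.two_mul_of_low (hhigh : X / 2 ^ m = 2 ^ m - 1)
    (h : IsLeadingOnes m (X % 2 ^ m) k) : IsLeadingOnes (2 * m) X (m + k) := by
  obtain ⟨hk, hones, hzero⟩ := h
  refine ⟨by omega, fun j hj => ?_, fun hlt => ?_⟩
  · by_cases hjm : j < m
    · rw [testBit_two_mul_sub_of_lt hjm, hhigh, Nat.testBit_two_pow_sub_one]
      simp only [decide_eq_true_eq]
      omega
    · rw [testBit_two_mul_sub_of_le (by omega) (by omega)]
      exact hones _ (by omega)
  · rw [testBit_two_mul_sub_of_le (by omega) (by omega), Nat.add_sub_cancel_left]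
    exact hzero (by omega)

end Halves

theorem stmt_10_general (m X : ℕ) (hX : X < 2 ^ (2 * m)) :
    LOC (2 * m) X =
      if X / 2 ^ m = 2 ^ m - 1 then m + LOC m (X % 2 ^ m) else LOC m (X / 2 ^ m) := by
  have hhigh : X / 2 ^ m < 2 ^ m :=
    Nat.div_lt_of_lt_mul (by rwa [← pow_add, ← two_mul])
  have hlow : X % 2 ^ m < 2 ^ m := Nat.mod_lt _ (Nat.two_pow_pos m)
  split_ifs with hall
  · exact LOC_eq_of_isLeadingOnes hX ((isLeadingOnes_LOC hlow).two_mul_of_low hall)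
  · exact LOC_eq_of_isLeadingOnes hX
      ((isLeadingOnes_LOC hhigh).two_mul_of_high (LOC_lt_of_ne hhigh hall))

theorem stmt_10 (m X : ℕ) (hm : 1 ≤ m) (hX : X < 2 ^ (2 * m)) :
    LOC (2 * m) X =
      if X / 2 ^ m = 2 ^ m - 1 then m + LOC m (X % 2 ^ m) else LOC m (X / 2 ^ m) :=
  stmt_10_general m X hX
end

section
/- Let p be a natural number, m = 2^p, and let X < 2^m be a natural number. Then (LZC_m(X)).testBit p = true if and only if X = 0; that is, when the register width is a power of two, the most significant bit of the leading-zero count serves as the all-zero flag, and it is set exactly when the input is all-zero. -/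
theorem stmt_11 (p m X : ℕ) (hm : m = 2 ^ p) (hX : X < 2 ^ m) :
    (LZC m X).testBit p = true ↔ X = 0 := by
  unfold LZC
  by_cases h0 : X = 0
  · simp [h0, hm, Nat.testBit_two_pow_self]
  · simp only [h0, if_false, iff_false]
    obtain ⟨i, hi, _⟩ := Nat.exists_most_significant_bit h0
    have him : i < m := by
      by_contra h
      push_neg at h
      have := Nat.testBit_lt_two_pow (Nat.lt_of_lt_of_le hX (Nat.pow_le_pow_right (by norm_num) h))
      simp [this] at hi
    have hmem : (m - 1 - i) ∈ {γ : ℕ | X.testBit (m - 1 - γ) = true} := by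
      have : m - 1 - (m - 1 - i) = i := by omega
      simpa [Set.mem_setOf_eq, this] using hi
    have hle : sInf {γ : ℕ | X.testBit (m - 1 - γ) = true} ≤ m - 1 - i :=
      Nat.sInf_le hmem
    have hlt : sInf {γ : ℕ | X.testBit (m - 1 - γ) = true} < 2 ^ p := by omega
    simp [Nat.testBit_lt_two_pow hlt]
end

section
/- Let p be a natural number, m = 2^p, and let X < 2^(2m) be a natural number, with high half X_H = X / 2^m and low half X_L = X % 2^m. Then LZC_{2m}(X) = LZC_m(X_H) + (if (LZC_m(X_H)).testBit p = true then LZC_m(X_L) else 0); that is, the merge circuit's conditional addition, controlled by the flag bit of the high-half count, computes the leading-zero count of the full 2m-bit word. -/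
/-!
For `X < 2 ^ m` the leading-zero count is `m - X.size`, and shifting right by `m` lowers the bit
length by `m`. So if the high half of a `2m`-bit word is nonzero, its count is the count of the
word; if it is zero, its count is `m` and the word's count is `m` plus that of the low half.
Since every count of the high half is at most `m = 2 ^ p`, bit `p` of it is set exactly in
the second case.
-/

namespace Nat

theorem lt_size_of_testBit {n i : ℕ} (h : n.testBit i = true) : i < n.size :=
  lt_size.mpr (ge_two_pow_of_testBit h)

theorem testBit_size_sub_one {n : ℕ} (hn : n ≠ 0) : n.testBit (n.size - 1) = true := by
  have hpos : 0 < n.size := size_pos.mpr (pos_of_ne_zero hn)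
  have hlo : 2 ^ (n.size - 1) ≤ n := lt_size.mp (by omega)
  have hhi : n < 2 ^ (n.size - 1) * 2 := by
    rw [← pow_succ, Nat.sub_add_cancel hpos]; exact lt_size_self n
  have htop : n / 2 ^ (n.size - 1) = 1 :=
    le_antisymm (Nat.lt_succ_iff.mp (Nat.div_lt_of_lt_mul hhi))
      ((Nat.one_le_div_iff (Nat.two_pow_pos _)).mpr hlo)
  simpa [htop] using (testBit_div_two_pow (n := n.size - 1) n 0).symm

theorem size_div_two_pow (n m : ℕ) : (n / 2 ^ m).size = n.size - m :=
  eq_of_forall_ge_iff fun c => by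
    rw [size_le, Nat.div_lt_iff_lt_mul (Nat.two_pow_pos m), ← pow_add, ← size_le]
    omega

theorem testBit_eq_true_iff_eq_two_pow_of_le {n p : ℕ} (h : n ≤ 2 ^ p) :
    n.testBit p = true ↔ n = 2 ^ p := by
  rcases h.lt_or_eq with h | rfl
  · simp [testBit_lt_two_pow h, h.ne]
  · simp [testBit_two_pow_self]

end Nat

open Nat

theorem LZC_eq_sub_size {m X : ℕ} (hX : X < 2 ^ m) : LZC m X = m - X.size := by
  rcases eq_or_ne X 0 with rfl | hX0
  · simp [LZC]
  have hsize : X.size ≤ m := size_le.mpr hX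
  have hpos : 0 < X.size := size_pos.mpr (pos_of_ne_zero hX0)
  have hmem : m - X.size ∈ {γ : ℕ | X.testBit (m - 1 - γ) = true} := by
    show X.testBit (m - 1 - (m - X.size)) = true
    rw [show m - 1 - (m - X.size) = X.size - 1 by omega]
    exact testBit_size_sub_one hX0
  rw [LZC, if_neg hX0]
  refine le_antisymm (Nat.sInf_le hmem) (le_csInf ⟨_, hmem⟩ fun γ hγ => ?_)
  have := lt_size_of_testBit hγ
  omega

theorem stmt_12 (p m X : ℕ) (hm : m = 2 ^ p) (hX : X < 2 ^ (2 * m)) :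
    LZC (2 * m) X =
      LZC m (X / 2 ^ m) +
        (if (LZC m (X / 2 ^ m)).testBit p = true then LZC m (X % 2 ^ m) else 0) := by
  have hXH : X / 2 ^ m < 2 ^ m :=
    Nat.div_lt_of_lt_mul (by rwa [← pow_add, ← two_mul])
  have hsize : X.size ≤ 2 * m := size_le.mpr hX
  have hflag := testBit_eq_true_iff_eq_two_pow_of_le (n := m - (X.size - m)) (p := p) (by omega)
  rw [LZC_eq_sub_size hX, LZC_eq_sub_size hXH, size_div_two_pow]
  by_cases hlow : X.size ≤ m
  · have hXL : X < 2 ^ m := size_le.mp hlow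
    rw [if_pos (hflag.mpr (by omega)), Nat.mod_eq_of_lt hXL, LZC_eq_sub_size hXL]
    omega
  · rw [if_neg fun h => by have := hflag.mp h; omega]
    omega
end

section
/- Let c be a Boolean and n a natural number. Define arrays Q^(i) : ℕ → Bool by Q^(0) 0 = c, Q^(0) j = false for 1 ≤ j ≤ n, and, for each round i, Q^(i+1) (j + 2^i) = xor (Q^(i) (j + 2^i)) (Q^(i) j) for every j with 0 ≤ j < 2^i and j + 2^i ≤ n, while Q^(i+1) k = Q^(i) k for all other k ≤ n. Then for every i and every j ≤ n, Q^(i) j = (if j < 2^i then c else false); that is, after i rounds of the fan-out procedure the number of positions storing c doubles each round, up to n + 1. -/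
theorem stmt_15 (c : Bool) (n : ℕ) (Q : ℕ → ℕ → Bool)
    (h0 : Q 0 0 = c)
    (h0' : ∀ j, 1 ≤ j → j ≤ n → Q 0 j = false)
    (hstep : ∀ i j, j < 2 ^ i → j + 2 ^ i ≤ n →
      Q (i + 1) (j + 2 ^ i) = xor (Q i (j + 2 ^ i)) (Q i j))
    (hfix : ∀ i k, k ≤ n →
      (¬ ∃ j, j < 2 ^ i ∧ j + 2 ^ i ≤ n ∧ k = j + 2 ^ i) → Q (i + 1) k = Q i k) :
    ∀ i j, j ≤ n → Q i j = (if j < 2 ^ i then c else false) := by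
  intro i
  induction i with
  | zero =>
    intro j hj
    rcases Nat.eq_zero_or_pos j with rfl | hpos
    · simpa using h0
    · rw [h0' j hpos hj]
      simp [Nat.lt_one_iff, Nat.pos_iff_ne_zero.mp hpos]
  | succ i ih =>
    intro j hj
    by_cases hex : ∃ j', j' < 2 ^ i ∧ j' + 2 ^ i ≤ n ∧ j = j' + 2 ^ i
    · obtain ⟨j', hj', hle, rfl⟩ := hex
      rw [hstep i j' hj' hle, ih _ hle, ih j' (le_trans (Nat.le_add_right _ _) hle)]
      have h1 : ¬ (j' + 2 ^ i < 2 ^ i) := by omega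
      have h2 : j' + 2 ^ i < 2 ^ (i + 1) := by
        rw [pow_succ]; omega
      simp [h1, hj', h2]
    · rw [hfix i j hj hex, ih j hj]
      by_cases h1 : j < 2 ^ i
      · have : j < 2 ^ (i + 1) := lt_of_lt_of_le h1 (Nat.pow_le_pow_right (by norm_num) (by omega))
        simp [h1, this]
      · have h2 : ¬ j < 2 ^ (i + 1) := by
          intro h
          apply hex
          refine ⟨j - 2 ^ i, ?_, ?_, ?_⟩ <;>
          · rw [pow_succ] at h; omega
        simp [h1, h2]
end

section
/- Let c be a Boolean and n a natural number. Define arrays Q^(i) : ℕ → Bool by Q^(0) 0 = c, Q^(0) j = false for 1 ≤ j ≤ n, and, for each round i, Q^(i+1) (j + 2^i) = xor (Q^(i) (j + 2^i)) (Q^(i) j) for every j with 0 ≤ j < 2^i and j + 2^i ≤ n, while Q^(i+1) k = Q^(i) k for all other k ≤ n. Then after r = Nat.clog 2 (n + 1) rounds (the ceiling of log base 2 of n + 1), Q^(r) j = c for every j ≤ n; that is, the fan-out procedure copies the control value to all n ancilla positions in ⌈log₂(n+1)⌉ rounds. -/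
theorem stmt_16 (c : Bool) (n : ℕ) (Q : ℕ → ℕ → Bool)
    (h0 : Q 0 0 = c)
    (h0' : ∀ j, 1 ≤ j → j ≤ n → Q 0 j = false)
    (hstep : ∀ i j, j < 2 ^ i → j + 2 ^ i ≤ n →
      Q (i + 1) (j + 2 ^ i) = xor (Q i (j + 2 ^ i)) (Q i j))
    (hfix : ∀ i k, k ≤ n →
      (¬ ∃ j, j < 2 ^ i ∧ j + 2 ^ i ≤ n ∧ k = j + 2 ^ i) → Q (i + 1) k = Q i k) :
    ∀ j, j ≤ n → Q (Nat.clog 2 (n + 1)) j = c := by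
  have inv : ∀ i, ∀ k ≤ n, (k < 2 ^ i → Q i k = c) ∧ (2 ^ i ≤ k → Q i k = false) := by
    intro i
    induction i with
    | zero =>
      intro k hk
      constructor
      · intro hlt
        interval_cases k
        exact h0
      · intro hge
        exact h0' k hge hk
    | succ i ih =>
      intro k hk
      constructor
      · intro hlt
        by_cases hsmall : k < 2 ^ i
        · rw [hfix i k hk]
          · exact (ih k hk).1 hsmall
          · rintro ⟨j, hj, -, rfl⟩
            omega
        · push_neg at hsmall
          obtain ⟨j, rfl⟩ := Nat.exists_eq_add_of_le' hsmall
          have hj : j < 2 ^ i := by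
            have : 2 ^ (i + 1) = 2 ^ i + 2 ^ i := by ring
            omega
          rw [hstep i j hj hk, (ih _ hk).2 (by omega), (ih j (by omega)).1 hj]
          cases c <;> rfl
      · intro hge
        rw [hfix i k hk]
        · exact (ih k hk).2 (by
            have : 2 ^ (i + 1) = 2 ^ i + 2 ^ i := by ring
            omega)
        · rintro ⟨j, hj, -, rfl⟩
          have : 2 ^ (i + 1) = 2 ^ i + 2 ^ i := by ring
          omega
  intro j hj
  have hpow : n + 1 ≤ 2 ^ Nat.clog 2 (n + 1) := Nat.le_pow_clog one_lt_two _
  exact (inv _ j hj).1 (by omega)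
end
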